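/- arXiv:1502.01998 — 3 statements merged into one kernel-verified Lean document; each statement's English description precedes it below -/
import Mathlib

section
/- Let K be a number field, let ℓ be a prime number, let k be a natural number, and let S be a finite set of finite places of K. For every family (x_v)_{v ∈ S} with x_v ∈ K_vˣ there exists α ∈ Kˣ such that for every v ∈ S the element ι_v(α) · x_v⁻¹ is an ℓ^k-th power in K_vˣ. Equivalently, the diagonal map Kˣ → ∏_{v ∈ S} K_vˣ/(K_vˣ)^{ℓ^k} is surjective. -/
/-!
Approximate the `x_v` simultaneously by one `α ∈ K`: each `x_v` is close to some element of `K`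
by density, and after clearing denominators the Chinese remainder theorem in `𝓞 K` produces a
single integer approximating all the numerators. Once `ι_v(α)` is within `‖n‖_v² ‖x_v‖` of `x_v`
(where `n = ℓ^k`), the quotient `u = ι_v(α) x_v⁻¹` satisfies `‖u - 1‖ < ‖n‖²`, and the simplified
Newton iteration `y ↦ y - (yⁿ - u)/n` contracts the ball of radius `‖u - 1‖/‖n‖` about `1` with
ratio `‖u - 1‖/‖n‖²`; its fixed point is an `n`-th root of `u`.
-/

namespace IsUltrametricDist

variable {F : Type*} [NormedField F] [IsUltrametricDist F] {r : ℝ}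

lemma norm_mul_sub_one_le {y z : F} (hr : r ≤ 1) (hy : ‖y - 1‖ ≤ r) (hz : ‖z - 1‖ ≤ r) :
    ‖y * z - 1‖ ≤ r := by
  have hy1 : ‖y‖ ≤ 1 := by
    simpa using (norm_add_le_max (y - 1) 1).trans (max_le (hy.trans hr) norm_one.le)
  rw [show y * z - 1 = y * (z - 1) + (y - 1) by ring]
  refine (norm_add_le_max _ _).trans (max_le ?_ hy)
  rw [norm_mul]
  nlinarith [norm_nonneg (z - 1), norm_nonneg y]

lemma norm_pow_sub_one_le {y : F} (hr : r ≤ 1) (hy : ‖y - 1‖ ≤ r) (i : ℕ) :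
    ‖y ^ i - 1‖ ≤ r := by
  induction i with
  | zero => simpa using (norm_nonneg _).trans hy
  | succ i ih => simpa [pow_succ] using norm_mul_sub_one_le hr ih hy

open Finset in
lemma norm_geom_sum₂_sub_le {y z : F} (hr : r ≤ 1) (hy : ‖y - 1‖ ≤ r) (hz : ‖z - 1‖ ≤ r)
    (n : ℕ) : ‖∑ i ∈ range n, y ^ i * z ^ (n - 1 - i) - n‖ ≤ r := by
  have hr0 : 0 ≤ r := (norm_nonneg _).trans hy
  have hsum : ∑ i ∈ range n, y ^ i * z ^ (n - 1 - i) - n =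
      ∑ i ∈ range n, (y ^ i * z ^ (n - 1 - i) - 1) := by simp
  rw [hsum]
  exact norm_sum_le_of_forall_le_of_nonneg hr0 fun i _ ↦
    norm_mul_sub_one_le hr (norm_pow_sub_one_le hr hy i) (norm_pow_sub_one_le hr hz _)

lemma norm_pow_sub_pow_sub_le {y z : F} (hr : r ≤ 1) (hy : ‖y - 1‖ ≤ r) (hz : ‖z - 1‖ ≤ r)
    (n : ℕ) : ‖y ^ n - z ^ n - n * (y - z)‖ ≤ r * ‖y - z‖ := by
  rw [← geom_sum₂_mul, ← sub_mul, norm_mul]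
  gcongr
  exact norm_geom_sum₂_sub_le hr hy hz n

open Metric Set NNReal in
lemma exists_pow_eq_of_norm_sub_one_lt [CompleteSpace F] {n : ℕ} {u : F}
    (hu : ‖u - 1‖ < ‖(n : F)‖ ^ 2) : ∃ y : F, y ^ n = u := by
  have hn : 0 < ‖(n : F)‖ := by nlinarith [norm_nonneg (u - 1), norm_nonneg (n : F)]
  set r := ‖u - 1‖ / ‖(n : F)‖ with hr_def
  have hr0 : 0 ≤ r := by positivity
  have hrn : r < ‖(n : F)‖ := (div_lt_iff₀ hn).2 (by rwa [← sq])
  have hr1 : r ≤ 1 := hrn.le.trans (norm_natCast_le_one F n)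
  obtain ⟨c, hc_coe⟩ : ∃ c : ℝ≥0, (c : ℝ) = r / ‖(n : F)‖ := ⟨⟨_, by positivity⟩, rfl⟩
  have hc : c < 1 := by rw [← NNReal.coe_lt_coe, hc_coe]; exact (div_lt_one hn).2 hrn
  set f : F → F := fun y ↦ y - (y ^ n - u) / n
  have hlip : ∀ y ∈ closedBall 1 r, ∀ z ∈ closedBall 1 r, ‖f y - f z‖ ≤ c * ‖y - z‖ := by
    intro y hy z hz
    rw [mem_closedBall_iff_norm] at hy hz
    have hfyz : f y - f z = -(y ^ n - z ^ n - n * (y - z)) / n := by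
      simp only [f]
      field_simp [norm_pos_iff.1 hn]
      ring
    rw [hfyz, norm_div, norm_neg, div_le_iff₀ hn]
    calc _ ≤ r * ‖y - z‖ := norm_pow_sub_pow_sub_le hr1 hy hz n
      _ = c * ‖y - z‖ * ‖(n : F)‖ := by rw [hc_coe]; field_simp
  have hmaps : MapsTo f (closedBall 1 r) (closedBall 1 r) := by
    intro y hy
    rw [mem_closedBall_iff_norm]
    have hf1 : ‖f 1 - 1‖ = r := by simp [f, hr_def, norm_div, ← norm_neg (1 - u)]
    have hcr : c * ‖y - 1‖ ≤ r := by
      calc (c : ℝ) * ‖y - 1‖ ≤ 1 * r := by gcongr; exacts [hc.le, mem_closedBall_iff_norm.1 hy]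
        _ = r := one_mul r
    rw [← sub_add_sub_cancel (f y) (f 1) 1]
    exact (norm_add_le_max _ _).trans
      (max_le ((hlip y hy 1 (mem_closedBall_self hr0)).trans hcr) hf1.le)
  obtain ⟨y, -, hfy, -⟩ := ContractingWith.exists_fixedPoint' isClosed_closedBall.isComplete
    hmaps ⟨hc, LipschitzWith.of_dist_le_mul fun y z ↦ by
      simpa only [Subtype.dist_eq, MapsTo.val_restrict_apply, dist_eq_norm] using hlip y y.2 z z.2⟩
    (mem_closedBall_self hr0) (edist_ne_top _ _)
  have hfix : (y ^ n - u) / n = 0 := sub_eq_self.1 hfy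
  exact ⟨y, by simpa [sub_eq_zero, norm_pos_iff.1 hn] using hfix⟩

lemma exists_pow_eq_mul_inv_of_norm_sub_lt [CompleteSpace F] {n : ℕ} (a x : Fˣ)
    (h : ‖(a : F) - x‖ < ‖(n : F)‖ ^ 2 * ‖(x : F)‖) : ∃ y : Fˣ, a * x⁻¹ = y ^ n := by
  have hx : 0 < ‖(x : F)‖ := norm_pos_iff.2 x.ne_zero
  have hn : n ≠ 0 := by
    rintro rfl
    simp only [Nat.cast_zero, norm_zero] at h
    nlinarith [norm_nonneg ((a : F) - x)]
  obtain ⟨y, hy⟩ := exists_pow_eq_of_norm_sub_one_lt (n := n) (u := (a : F) * (x : F)⁻¹) <| by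
    rwa [← mul_inv_cancel₀ x.ne_zero, ← sub_mul, norm_mul, norm_inv, mul_inv_lt_iff₀ hx]
  have hy0 : y ≠ 0 := ne_zero_pow hn (hy ▸ mul_ne_zero a.ne_zero (inv_ne_zero x.ne_zero))
  exact ⟨Units.mk0 y hy0, Units.ext (by simp [hy])⟩

end IsUltrametricDist

open IsDedekindDomain IsDedekindDomain.HeightOneSpectrum NumberField
open scoped NumberField NNReal

namespace NumberField.HeightOneSpectrum

variable {K : Type*} [Field K] [NumberField K] (v : HeightOneSpectrum (𝓞 K))

open WithZeroMulInt in
lemma exists_forall_mem_pow_norm_lt {ε : ℝ} (hε : 0 < ε) :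
    ∃ M : ℕ, ∀ r ∈ v.asIdeal ^ M,
      ‖algebraMap K (v.adicCompletion K) (algebraMap (𝓞 K) K r)‖ < ε := by
  set c : ℝ≥0 := toNNReal (absNorm_ne_zero v) (WithZero.exp (-1))
  have hc : c < 1 := by
    rw [← map_one (toNNReal (absNorm_ne_zero v)), ← WithZero.exp_zero]
    exact toNNReal_strictMono (one_lt_absNorm_nnreal v) (WithZero.exp_lt_exp.2 neg_one_lt_zero)
  obtain ⟨M, hM⟩ := exists_pow_lt_of_lt_one hε (mod_cast hc : (c : ℝ) < 1)
  refine ⟨M, fun r hr ↦ lt_of_le_of_lt ?_ hM⟩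
  rw [show algebraMap K (v.adicCompletion K) = FinitePlace.embedding v from rfl,
    FinitePlace.norm_embedding_int]
  have hval := (toNNReal_strictMono (one_lt_absNorm_nnreal v)).monotone
    ((v.intValuation_le_pow_iff_mem r M).2 hr)
  rw [show -(M : ℤ) = M • (-1) by simp, WithZero.exp_nsmul, map_pow] at hval
  exact_mod_cast hval

lemma exists_forall_norm_algebraMap_sub_lt_global (S : Finset (HeightOneSpectrum (𝓞 K)))
    (β : HeightOneSpectrum (𝓞 K) → K) {ε : HeightOneSpectrum (𝓞 K) → ℝ}
    (hε : ∀ v ∈ S, 0 < ε v) :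
    ∃ α : K, ∀ v ∈ S, ‖algebraMap K (v.adicCompletion K) (α - β v)‖ < ε v := by
  classical
  obtain ⟨b, hb⟩ := IsLocalization.exist_integer_multiples (nonZeroDivisors (𝓞 K)) S β
  choose a ha using hb
  set d : K := algebraMap (𝓞 K) K b
  have hd : d ≠ 0 := by simp [d, nonZeroDivisors.coe_ne_zero b]
  have hd_norm : ∀ v : HeightOneSpectrum (𝓞 K), 0 < ‖algebraMap K (v.adicCompletion K) d‖ :=
    fun v ↦ norm_pos_iff.2 ((map_ne_zero _).2 hd)
  have hM : ∀ v, ∃ M : ℕ, v ∈ S → ∀ r ∈ v.asIdeal ^ M,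
      ‖algebraMap K (v.adicCompletion K) (algebraMap (𝓞 K) K r)‖ <
        ε v * ‖algebraMap K (v.adicCompletion K) d‖ := by
    intro v
    by_cases hv : v ∈ S
    · exact (exists_forall_mem_pow_norm_lt v (mul_pos (hε v hv) (hd_norm v))).imp fun _ h _ ↦ h
    · exact ⟨0, fun h ↦ (hv h).elim⟩
  choose M hM using hM
  obtain ⟨A, hA⟩ := IsDedekindDomain.exists_forall_sub_mem_ideal (s := S) (fun v ↦ v.asIdeal) M
    (fun v _ ↦ v.prime) (fun v _ w _ hvw h ↦ hvw (HeightOneSpectrum.ext h)) (fun v ↦ a v.1 v.2)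
  refine ⟨algebraMap (𝓞 K) K A / d, fun v hv ↦ ?_⟩
  have hβ : β v = algebraMap (𝓞 K) K (a v hv) / d := by
    rw [ha v hv, Algebra.smul_def, mul_div_cancel_left₀ _ hd]
  rw [hβ, ← sub_div, ← map_sub, map_div₀, norm_div, div_lt_iff₀ (hd_norm v)]
  exact hM v hv _ (hA v hv)

lemma exists_forall_norm_algebraMap_sub_lt (S : Finset (HeightOneSpectrum (𝓞 K)))
    (z : ∀ v : HeightOneSpectrum (𝓞 K), v.adicCompletion K) {ε : HeightOneSpectrum (𝓞 K) → ℝ}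
    (hε : ∀ v ∈ S, 0 < ε v) :
    ∃ α : K, ∀ v ∈ S, ‖algebraMap K (v.adicCompletion K) α - z v‖ < ε v := by
  have hβ : ∀ v, ∃ β : K, v ∈ S → ‖algebraMap K (v.adicCompletion K) β - z v‖ < ε v := by
    intro v
    by_cases hv : v ∈ S
    · obtain ⟨β, hβ⟩ := (denseRange_algebraMap K v).exists_dist_lt (z v) (hε v hv)
      exact ⟨β, fun _ ↦ by rwa [dist_comm, dist_eq_norm] at hβ⟩
    · exact ⟨0, fun h ↦ (hv h).elim⟩
  choose β hβ using hβ
  obtain ⟨α, hα⟩ := exists_forall_norm_algebraMap_sub_lt_global S β hε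
  refine ⟨α, fun v hv ↦ ?_⟩
  rw [← sub_add_sub_cancel _ (algebraMap K (v.adicCompletion K) (β v)), ← map_sub]
  exact (IsUltrametricDist.norm_add_le_max _ _).trans_lt (max_lt (hα v hv) (hβ v hv))

end NumberField.HeightOneSpectrum

open NumberField.HeightOneSpectrum in
/-- **ℓ-adic approximation theorem (finite level).**
For a number field `K`, a prime `ℓ`, `k : ℕ` and a finite set `S` of finite places of `K`
(i.e. maximal ideals of `𝓞 K`), every family `(x_v)_{v ∈ S}` of units of the completions `K_v`
can be approximated by a single global element `α ∈ Kˣ`, in the sense that for each `v ∈ S`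
the element `ι_v(α) * x_v⁻¹` is an `ℓ^k`-th power in `K_vˣ`. -/
theorem ladic_approximation
    (K : Type*) [Field K] [NumberField K]
    (ℓ : ℕ) (hℓ : ℓ.Prime) (k : ℕ)
    (S : Finset (HeightOneSpectrum (𝓞 K)))
    (x : ∀ v : HeightOneSpectrum (𝓞 K), (v.adicCompletion K)ˣ) :
    ∃ α : Kˣ, ∀ v ∈ S, ∃ y : (v.adicCompletion K)ˣ,
      Units.map (algebraMap K (v.adicCompletion K)).toMonoidHom α * (x v)⁻¹ = y ^ (ℓ ^ k) := by
  obtain rfl | ⟨v₀, hv₀⟩ := S.eq_empty_or_nonempty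
  · exact ⟨1, by simp⟩
  have hn : ∀ v : HeightOneSpectrum (𝓞 K), ((ℓ ^ k : ℕ) : v.adicCompletion K) ≠ 0 := fun v ↦ by
    rw [← map_natCast (algebraMap K (v.adicCompletion K))]
    exact (map_ne_zero _).2 (Nat.cast_ne_zero.2 (pow_ne_zero k hℓ.ne_zero))
  obtain ⟨α, hα⟩ := exists_forall_norm_algebraMap_sub_lt S (fun v ↦ x v)
    (ε := fun v ↦ ‖((ℓ ^ k : ℕ) : v.adicCompletion K)‖ ^ 2 * ‖(x v : v.adicCompletion K)‖)
    fun v _ ↦ mul_pos (pow_pos (norm_pos_iff.2 (hn v)) 2) (norm_pos_iff.2 (x v).ne_zero)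
  have hα0 : α ≠ 0 := by
    rintro rfl
    have h := hα v₀ hv₀
    rw [map_zero, zero_sub, norm_neg] at h
    exact h.not_ge (mul_le_of_le_one_left (norm_nonneg _) (pow_le_one₀ (norm_nonneg _)
      (IsUltrametricDist.norm_natCast_le_one _ _)))
  exact ⟨Units.mk0 α hα0, fun v hv ↦
    IsUltrametricDist.exists_pow_eq_mul_inv_of_norm_sub_lt _ _ (hα v hv)⟩
end

section
/- Let L/K be a finite extension of number fields, let v be a finite place of K and w a place of L lying above v, let ℓ be a prime number and k a natural number. If α ∈ Kˣ is a local norm at w, i.e. there exists z ∈ L_wˣ with N_{L_w/K_v}(z) = ι_v(α), then there exists y ∈ Lˣ such that ι_v(α · N_{L/K}(y)⁻¹) is an ℓ^k-th power in K_vˣ. -/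
/-!
Put `A = K_v ⊗_K L`. As `L/K` is separable, `A` is reduced, hence semisimple, and the natural map
`A → L_w` is onto because its range is finite-dimensional, hence closed, and contains the dense
image of `L`. So `L_w` is a direct factor of `A`, and the element that is `z` on this factor and `1`
on the complement has norm `N_{L_w/K_v}(z)`. The norm of `A` is a polynomial in the coordinates, and
`N_{A/K_v}(1 ⊗ y) = N_{L/K}(y)`, so by density of `K` in `K_v` every local norm is a limit of global
norms. Finally, Newton's method in the complete ultrametric field `K_v` makes every `x` with
`|x - 1| < |q|²` a `q`-th power (here `q = ℓ^k ≠ 0` in `K_v`), which applies to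
`x = α / N_{L/K}(y)` for `N_{L/K}(y)` close enough to `α`.
-/

open Filter Topology
open scoped TensorProduct WithZero

section Ultrametric

variable {F : Type*} [NormedField F]

theorem norm_newton_pow_step_sub {q : ℕ} {x t : F} (ht : ‖t‖ = 1) :
    ‖t - (t ^ q - x) / (q * t ^ (q - 1)) - t‖ = ‖t ^ q - x‖ / ‖(q : F)‖ := by
  simp [ht]

variable [IsUltrametricDist F]

theorem norm_add_pow_sub_pow_sub_le {t h : F} (ht : ‖t‖ ≤ 1) (hh : ‖h‖ ≤ 1) (q : ℕ) :
    ‖(t + h) ^ q - t ^ q - q * t ^ (q - 1) * h‖ ≤ ‖h‖ ^ 2 := by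
  cases q with
  | zero => simp
  | succ n =>
    have hexpand : (t + h) ^ (n + 1) - t ^ (n + 1) - (n + 1 : ℕ) * t ^ n * h =
        ∑ k ∈ Finset.range n, t ^ k * h ^ (n + 1 - k) * ((n + 1).choose k : F) := by
      rw [add_pow, Finset.sum_range_succ, Finset.sum_range_succ, Nat.choose_succ_self_right,
        Nat.choose_self, Nat.sub_self, Nat.add_sub_cancel_left]
      push_cast
      ring
    rw [Nat.add_sub_cancel, hexpand]
    refine IsUltrametricDist.norm_sum_le_of_forall_le_of_nonneg (by positivity) fun k hk ↦ ?_
    have h2 : 2 ≤ n + 1 - k := by rw [Finset.mem_range] at hk; omega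
    rw [norm_mul, norm_mul, norm_pow, norm_pow]
    calc ‖t‖ ^ k * ‖h‖ ^ (n + 1 - k) * ‖((n + 1).choose k : F)‖
        ≤ 1 * ‖h‖ ^ (n + 1 - k) * 1 := by
          gcongr
          · exact pow_le_one₀ (norm_nonneg _) ht
          · exact IsUltrametricDist.norm_natCast_le_one F _
      _ ≤ ‖h‖ ^ 2 := by
          rw [one_mul, mul_one]
          exact pow_le_pow_of_le_one (norm_nonneg _) hh h2

theorem norm_newton_pow_step_eq_one {q : ℕ} {x t : F} (ht : ‖t‖ = 1)
    (hx : ‖t ^ q - x‖ < ‖(q : F)‖) : ‖t - (t ^ q - x) / (q * t ^ (q - 1))‖ = 1 := by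
  have hsmall : ‖t - (t ^ q - x) / (q * t ^ (q - 1)) - t‖ < ‖t‖ := by
    rw [norm_newton_pow_step_sub ht, ht, div_lt_one ((norm_nonneg _).trans_lt hx)]
    exact hx
  rw [← sub_add_cancel (t - _) t, IsUltrametricDist.norm_add_eq_max_of_norm_ne_norm hsmall.ne,
    max_eq_right hsmall.le, ht]

theorem norm_newton_pow_step_le {q : ℕ} {x t : F} (hq : (q : F) ≠ 0) (ht : ‖t‖ = 1)
    (hx : ‖t ^ q - x‖ ≤ ‖(q : F)‖) :
    ‖(t - (t ^ q - x) / (q * t ^ (q - 1))) ^ q - x‖ ≤ (‖t ^ q - x‖ / ‖(q : F)‖) ^ 2 := by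
  have ht0 : t ≠ 0 := norm_ne_zero_iff.mp (ht ▸ one_ne_zero)
  set h := -((t ^ q - x) / (q * t ^ (q - 1))) with hh
  have hnorm_h : ‖h‖ = ‖t ^ q - x‖ / ‖(q : F)‖ := by simp [hh, ht]
  have hlin : t ^ q - x + q * t ^ (q - 1) * h = 0 := by
    rw [hh, mul_neg, mul_div_cancel₀ _ (mul_ne_zero hq (pow_ne_zero _ ht0)), add_neg_cancel]
  calc ‖(t - (t ^ q - x) / (q * t ^ (q - 1))) ^ q - x‖
      = ‖(t + h) ^ q - t ^ q - q * t ^ (q - 1) * h‖ := by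
        rw [hh, ← sub_eq_add_neg]; congr 1; linear_combination hlin
    _ ≤ ‖h‖ ^ 2 :=
        norm_add_pow_sub_pow_sub_le ht.le (hnorm_h ▸ div_le_one_of_le₀ hx (norm_nonneg _)) q
    _ = _ := by rw [hnorm_h]

theorem exists_pow_eq_of_norm_sub_one_lt [CompleteSpace F] {q : ℕ} {x : F} (hq : (q : F) ≠ 0)
    (hx : ‖x - 1‖ < ‖(q : F)‖ ^ 2) : ∃ b : F, b ^ q = x := by
  set Q := ‖(q : F)‖
  set δ := ‖x - 1‖
  set ρ := δ / Q ^ 2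
  have hQ : 0 < Q := norm_pos_iff.mpr hq
  have hQ1 : Q ≤ 1 := IsUltrametricDist.norm_natCast_le_one F q
  have hδQ : δ < Q := hx.trans_le (pow_le_of_le_one hQ.le hQ1 two_ne_zero)
  have hρ0 : 0 ≤ ρ := by positivity
  have hρ1 : ρ < 1 := (div_lt_one (by positivity)).mpr hx
  set N : F → F := fun t ↦ t - (t ^ q - x) / (q * t ^ (q - 1))
  set t : ℕ → F := fun m ↦ N^[m] 1
  have ht_succ : ∀ m, t (m + 1) = N (t m) := fun m ↦ Function.iterate_succ_apply' N m 1
  have key : ∀ m, ‖t m‖ = 1 ∧ ‖t m ^ q - x‖ ≤ δ * ρ ^ m := by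
    intro m
    induction m with
    | zero => simp [t, δ, norm_sub_rev]
    | succ m ih =>
      obtain ⟨ht, he⟩ := ih
      have heQ : ‖t m ^ q - x‖ < Q :=
        (he.trans (mul_le_of_le_one_right (norm_nonneg _) (pow_le_one₀ hρ0 hρ1.le))).trans_lt hδQ
      rw [ht_succ]
      refine ⟨norm_newton_pow_step_eq_one ht heQ, ?_⟩
      calc ‖N (t m) ^ q - x‖ ≤ (‖t m ^ q - x‖ / Q) ^ 2 := norm_newton_pow_step_le hq ht heQ.le
        _ ≤ (δ * ρ ^ m / Q) ^ 2 := by gcongr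
        _ = δ * ρ ^ (2 * m + 1) := by ring
        _ ≤ δ * ρ ^ (m + 1) := by
            gcongr δ * ?_
            exact pow_le_pow_of_le_one hρ0 hρ1.le (by omega)
  have hcauchy : CauchySeq t := by
    refine cauchySeq_of_le_geometric ρ (δ / Q) hρ1 fun m ↦ ?_
    rw [dist_comm, dist_eq_norm, ht_succ, norm_newton_pow_step_sub (key m).1]
    calc ‖t m ^ q - x‖ / Q ≤ δ * ρ ^ m / Q := by gcongr; exact (key m).2
      _ = δ / Q * ρ ^ m := by ring
  obtain ⟨b, hb⟩ := cauchySeq_tendsto_of_complete hcauchy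
  refine ⟨b, sub_eq_zero.mp (tendsto_nhds_unique ((hb.pow q).sub_const x) ?_)⟩
  refine squeeze_zero_norm (fun m ↦ (key m).2) ?_
  simpa using (tendsto_pow_atTop_nhds_zero_of_lt_one hρ0 hρ1).const_mul δ

theorem eventually_exists_unit_pow_eq_div [CompleteSpace F] {q : ℕ} (hq : (q : F) ≠ 0) {a : F}
    (ha : a ≠ 0) : ∀ᶠ t in 𝓝 a, ∃ u : Fˣ, a / t = ↑(u ^ q) := by
  have hlim : Tendsto (fun t ↦ a / t) (𝓝 a) (𝓝 (a / a)) := tendsto_const_nhds.div tendsto_id ha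
  rw [div_self ha] at hlim
  filter_upwards [eventually_ne_nhds ha,
    hlim.eventually (Metric.ball_mem_nhds 1 (by positivity : 0 < ‖(q : F)‖ ^ 2))] with t ht0 ht
  obtain ⟨b, hb⟩ := exists_pow_eq_of_norm_sub_one_lt hq (by rwa [← dist_eq_norm])
  have hb0 : b ≠ 0 := by
    rintro rfl
    rw [zero_pow (by rintro rfl; exact hq Nat.cast_zero)] at hb
    exact div_ne_zero ha ht0 hb.symm
  exact ⟨Units.mk0 b hb0, by simp [hb]⟩

end Ultrametric

namespace Algebra

theorem norm_prod_apply {R S T : Type*} [CommRing R] [CommRing S] [CommRing T]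
    [Algebra R S] [Algebra R T] [Module.Free R S] [Module.Free R T]
    [Module.Finite R S] [Module.Finite R T] (x : S × T) :
    norm R x = norm R x.1 * norm R x.2 := by
  have : lmul R (S × T) x = (lmul R S x.1).prodMap (lmul R T x.2) := LinearMap.ext fun _ ↦ rfl
  rw [norm_apply, norm_apply, norm_apply, this, LinearMap.det_prodMap]

theorem exists_norm_eq_of_surjective {K A B : Type*} [Field K] [CommRing A] [IsReduced A]
    [Algebra K A] [Module.Finite K A] [CommRing B] [Algebra K B]
    {π : A →ₐ[K] B} (hπ : Function.Surjective π) (b : B) :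
    ∃ a : A, norm K a = norm K b := by
  have : IsArtinianRing A := .of_finite K A
  have : IsSemisimpleRing A := IsArtinianRing.isSemisimpleRing_of_isReduced A
  obtain ⟨J, hJ⟩ := exists_isCompl (RingHom.ker π)
  let crt : A ≃ₐ[K] (A ⧸ RingHom.ker π) × (A ⧸ J) :=
    ((AlgEquiv.quotientBot K A).symm.trans (Ideal.quotientEquivAlgOfEq K hJ.inf_eq_bot.symm)).trans
      (AlgEquiv.ofRingEquiv (f := Ideal.quotientInfEquivQuotientProd _ _
        (Ideal.isCoprime_iff_sup_eq.mpr hJ.sup_eq_top)) fun _ ↦ rfl)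
  obtain ⟨a₀, rfl⟩ := hπ b
  refine ⟨crt.symm (Ideal.Quotient.mk _ a₀, 1), ?_⟩
  rw [← norm_eq_of_algEquiv crt, AlgEquiv.apply_symm_apply, norm_prod_apply, map_one, mul_one,
    ← Ideal.quotientKerAlgEquivOfSurjective_mk hπ, norm_eq_of_algEquiv]

theorem norm_one_tmul {R S A : Type*} [CommRing R] [CommRing S] [CommRing A]
    [Algebra R S] [Algebra R A] [Module.Free R S] [Module.Finite R S] (x : S) :
    norm A ((1 : A) ⊗ₜ[R] x) = algebraMap R A (norm R x) := by
  have : lmul A (A ⊗[R] S) (1 ⊗ₜ x) = (lmul R S x).baseChange A := by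
    ext s
    simp
  rw [norm_apply, norm_apply, ← LinearMap.det_baseChange]
  exact congrArg LinearMap.det this

end Algebra

theorem LinearMap.surjective_of_denseRange {𝕜 E F : Type*} [NontriviallyNormedField 𝕜]
    [CompleteSpace 𝕜] [AddCommGroup E] [Module 𝕜 E] [FiniteDimensional 𝕜 E]
    [AddCommGroup F] [Module 𝕜 F] [TopologicalSpace F] [IsTopologicalAddGroup F]
    [ContinuousSMul 𝕜 F] [T2Space F] (f : E →ₗ[𝕜] F) (hf : DenseRange f) :
    Function.Surjective f := by
  rw [← Set.range_eq_univ, ← f.coe_range, ← f.range.closed_of_finiteDimensional.closure_eq]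
  exact hf.closure_range

theorem Algebra.TensorProduct.norm_mem_closure_range_norm {K L Kv : Type*} [Field K] [CommRing L]
    [Algebra K L] [Module.Finite K L] [CommRing Kv] [TopologicalSpace Kv] [IsTopologicalRing Kv]
    [Algebra K Kv] (hK : DenseRange (algebraMap K Kv)) (a : Kv ⊗[K] L) :
    norm Kv a ∈ closure (Set.range fun y : L ↦ algebraMap K Kv (norm K y)) := by
  let b := Module.finBasis K L
  let bKv := b.baseChange Kv
  let Φ : (Fin (Module.finrank K L) → Kv) → Kv := fun c ↦ norm Kv (bKv.equivFun.symm c)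
  have hΦ : Continuous Φ := by
    have : Φ = fun c ↦ (leftMulMatrix bKv (bKv.equivFun.symm c)).det :=
      funext fun c ↦ norm_eq_matrix_det bKv _
    rw [this]
    exact (LinearMap.continuous_on_pi
      ((leftMulMatrix bKv).toLinearMap ∘ₗ bKv.equivFun.symm.toLinearMap)).matrix_det
  have hΦK (d : Fin (Module.finrank K L) → K) :
      Φ (algebraMap K Kv ∘ d) = algebraMap K Kv (norm K (b.equivFun.symm d)) := by
    have hcoord : bKv.equivFun.symm (algebraMap K Kv ∘ d) = 1 ⊗ₜ b.equivFun.symm d := by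
      simp [bKv, Module.Basis.equivFun_symm_apply, TensorProduct.tmul_sum,
        TensorProduct.smul_tmul', algebraMap_eq_smul_one]
    rw [← norm_one_tmul, ← hcoord]
  have hΦa : norm Kv a = Φ (bKv.equivFun a) := by simp [Φ]
  refine closure_mono ?_ (hΦ.range_subset_closure_image_dense (DenseRange.piMap fun _ ↦ hK)
    ⟨_, hΦa.symm⟩)
  rintro _ ⟨_, ⟨d, rfl⟩, rfl⟩
  exact ⟨_, (hΦK d).symm⟩

open IsDedekindDomain IsDedekindDomain.HeightOneSpectrum NumberField
open scoped NumberField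

theorem NumberField.norm_adicCompletion_mem_closure_range_norm {K L : Type*} [Field K]
    [NumberField K] [Field L] [NumberField L] [Algebra K L]
    (v : HeightOneSpectrum (𝓞 K)) (w : HeightOneSpectrum (𝓞 L))
    [Algebra (v.adicCompletion K) (w.adicCompletion L)]
    [ContinuousSMul (v.adicCompletion K) (w.adicCompletion L)]
    [IsScalarTower K (v.adicCompletion K) (w.adicCompletion L)] (z : w.adicCompletion L) :
    Algebra.norm (v.adicCompletion K) z ∈ closure
      (Set.range fun y : L ↦ algebraMap K (v.adicCompletion K) (Algebra.norm K y)) := by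
  have : Algebra.FormallyUnramified K L := .of_isSeparable K L
  have : IsReduced (v.adicCompletion K ⊗[K] L) :=
    Algebra.FormallyUnramified.isReduced_of_field (v.adicCompletion K) _
  let Φ : v.adicCompletion K ⊗[K] L →ₐ[v.adicCompletion K] w.adicCompletion L :=
    Algebra.TensorProduct.lift (Algebra.ofId _ _) (IsScalarTower.toAlgHom K L _)
      fun _ _ ↦ .all _ _
  have hΦ : Function.Surjective Φ := by
    let _ := Valued.toNontriviallyNormedField (v.adicCompletion K) ℤᵐ⁰
    refine Φ.toLinearMap.surjective_of_denseRange ((w.denseRange_algebraMap L).mono ?_)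
    rintro _ ⟨y, rfl⟩
    exact ⟨1 ⊗ₜ y, by simp [Φ]⟩
  obtain ⟨a, ha⟩ := Algebra.exists_norm_eq_of_surjective hΦ z
  exact ha ▸ Algebra.TensorProduct.norm_mem_closure_range_norm (v.denseRange_algebraMap K) a

theorem local_norm_approx_by_global_norms_general
    (K L : Type*) [Field K] [NumberField K] [Field L] [NumberField L]
    [Algebra K L]
    (v : HeightOneSpectrum (𝓞 K)) (w : HeightOneSpectrum (𝓞 L))
    (ℓ : ℕ) (hℓ : ℓ.Prime) (k : ℕ)
    (φ : v.adicCompletion K →+* w.adicCompletion L)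
    (hφcont : Continuous φ)
    (hφcompat : ∀ x : K,
      φ (algebraMap K (v.adicCompletion K) x) =
        algebraMap L (w.adicCompletion L) (algebraMap K L x))
    (α : Kˣ)
    (hnorm : ∃ z : (w.adicCompletion L)ˣ,
      @Algebra.norm (v.adicCompletion K) (w.adicCompletion L) _ _ φ.toAlgebra
        (z : w.adicCompletion L) = algebraMap K (v.adicCompletion K) (α : K)) :
    ∃ y : Lˣ, ∃ u : (v.adicCompletion K)ˣ,
      Units.map (algebraMap K (v.adicCompletion K)).toMonoidHom
          (α * (Units.map (Algebra.norm K : L →* K) y)⁻¹) = u ^ (ℓ ^ k) := by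
  let _ : Algebra (v.adicCompletion K) (w.adicCompletion L) := φ.toAlgebra
  have : IsScalarTower K (v.adicCompletion K) (w.adicCompletion L) :=
    .of_algebraMap_eq fun x ↦ (IsScalarTower.algebraMap_apply K L _ x).trans (hφcompat x).symm
  have : ContinuousSMul (v.adicCompletion K) (w.adicCompletion L) :=
    ⟨(hφcont.comp continuous_fst).mul continuous_snd⟩
  obtain ⟨z, hz⟩ := hnorm
  have hmem := hz ▸ norm_adicCompletion_mem_closure_range_norm v w (z : w.adicCompletion L)
  have : CharZero (v.adicCompletion K) :=
    charZero_of_injective_algebraMap (algebraMap K _).injective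
  have hq : ((ℓ ^ k : ℕ) : v.adicCompletion K) ≠ 0 := by
    exact_mod_cast pow_ne_zero k hℓ.ne_zero
  obtain ⟨_, ⟨u, hu⟩, y, rfl⟩ := mem_closure_iff_nhds.mp hmem _
    (eventually_exists_unit_pow_eq_div hq (by simp))
  have hy : y ≠ 0 := by
    rintro rfl
    exact (u ^ ℓ ^ k).ne_zero (by simpa using hu.symm)
  refine ⟨Units.mk0 y hy, u, Units.ext ?_⟩
  simpa [div_eq_mul_inv] using hu

/-- **Approximation of a local norm by global norms, to any ℓ-power level.**
Let `L/K` be a finite extension of number fields, `v` a finite place of `K` and `w` a place of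
`L` lying above `v` (i.e. `w ∩ 𝓞 K = v`).  The completion `L_w` is regarded as a `K_v`-algebra
via the (unique) continuous ring homomorphism `φ : K_v →+* L_w` compatible with the inclusions
`K → K_v` and `K → L → L_w`; the local norm `N_{L_w/K_v}` is `Algebra.norm` for this structure.
If `α ∈ Kˣ` is a local norm at `w`, i.e. there is `z ∈ L_wˣ` with `N_{L_w/K_v}(z) = ι_v(α)`,
then for every prime `ℓ` and every `k : ℕ` there is `y ∈ Lˣ` such that
`ι_v(α · N_{L/K}(y)⁻¹)` is an `ℓ^k`-th power in `K_vˣ`. -/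
theorem local_norm_approx_by_global_norms
    (K L : Type*) [Field K] [NumberField K] [Field L] [NumberField L]
    [Algebra K L] [FiniteDimensional K L]
    (v : HeightOneSpectrum (𝓞 K)) (w : HeightOneSpectrum (𝓞 L))
    (hw : w.asIdeal.comap (algebraMap (𝓞 K) (𝓞 L)) = v.asIdeal)
    (ℓ : ℕ) (hℓ : ℓ.Prime) (k : ℕ)
    (φ : v.adicCompletion K →+* w.adicCompletion L)
    (hφcont : Continuous φ)
    (hφcompat : ∀ x : K,
      φ (algebraMap K (v.adicCompletion K) x) =
        algebraMap L (w.adicCompletion L) (algebraMap K L x))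
    (hfin : @FiniteDimensional (v.adicCompletion K) (w.adicCompletion L) _ _
      (@Algebra.toModule _ _ _ _ φ.toAlgebra))
    (α : Kˣ)
    (hnorm : ∃ z : (w.adicCompletion L)ˣ,
      @Algebra.norm (v.adicCompletion K) (w.adicCompletion L) _ _ φ.toAlgebra
        (z : w.adicCompletion L) = algebraMap K (v.adicCompletion K) (α : K)) :
    ∃ y : Lˣ, ∃ u : (v.adicCompletion K)ˣ,
      Units.map (algebraMap K (v.adicCompletion K)).toMonoidHom
          (α * (Units.map (Algebra.norm K : L →* K) y)⁻¹) = u ^ (ℓ ^ k) :=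
  local_norm_approx_by_global_norms_general K L v w ℓ hℓ k φ hφcont hφcompat α hnorm
end

section
/- Let L/K be a finite extension of number fields, let 𝔪 be a nonzero ideal of 𝒪_K, and let 𝔘 be a nonzero fractional ideal of L whose relative norm N_{L/K}(𝔘) is coprime to 𝔪, i.e. has valuation 0 at every prime of K dividing 𝔪. Then there exists a nonzero fractional ideal 𝔅 of L which is coprime to 𝔪 — meaning that v_w(𝔅) = 0 for every finite place w of L lying above a prime of K dividing 𝔪 — and which satisfies N_{L/K}(𝔅) = N_{L/K}(𝔘). -/
open IsDedekindDomain IsDedekindDomain.HeightOneSpectrum NumberField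
open scoped NumberField nonZeroDivisors

variable (K L : Type*) [Field K] [NumberField K] [Field L] [NumberField L]
  [Algebra K L] [FiniteDimensional K L]

/-- The exponent of the finite place `v` of `K` in the relative norm `N_{L/K}(I)` of a
nonzero fractional ideal `I` of `L`: it equals `∑_{w ∣ v} f(w/v) · v_w(I)`, the sum being
over the places `w` of `L` above `v` (the terms for `w` not above `v` vanish, since
`Ideal.inertiaDeg` is zero there by convention). -/
noncomputable def relNormCount (I : FractionalIdeal (𝓞 L)⁰ L)
    (v : HeightOneSpectrum (𝓞 K)) : ℤ :=
  ∑ᶠ w : HeightOneSpectrum (𝓞 L),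
    (Ideal.inertiaDeg' v.asIdeal w.asIdeal : ℤ) *
      FractionalIdeal.count L w I

theorem FractionalIdeal.exists_ne_zero_forall_count_eq {R F : Type*} [CommRing R]
    [IsDedekindDomain R] [Field F] [Algebra R F] [IsFractionRing R F]
    (e : HeightOneSpectrum R → ℤ) (he : ∀ᶠ v in Filter.cofinite, e v = 0) :
    ∃ J : FractionalIdeal R⁰ F, J ≠ 0 ∧ ∀ v, count F v J = e v := by
  let exps : HeightOneSpectrum R →₀ ℤ := Finsupp.mk he.toFinset e fun _ ↦ he.mem_toFinset
  refine ⟨exps.prod (HeightOneSpectrum.asIdeal · ^ ·), ?_, fun v ↦ count_finsuppProd F v exps⟩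
  exact Finset.prod_ne_zero_iff.mpr fun v _ ↦ zpow_ne_zero _ (coeIdeal_ne_zero.mpr v.ne_bot)

theorem relNormCount_congr {K L : Type*} [Field K] [Field L] [NumberField L] [Algebra K L]
    {I J : FractionalIdeal (𝓞 L)⁰ L} {v : HeightOneSpectrum (𝓞 K)}
    (h : ∀ w : HeightOneSpectrum (𝓞 L), w.asIdeal.comap (algebraMap (𝓞 K) (𝓞 L)) = v.asIdeal →
      FractionalIdeal.count L w I = FractionalIdeal.count L w J) :
    relNormCount K L I v = relNormCount K L J v := by
  refine finsum_congr fun w ↦ ?_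
  by_cases hwv : w.asIdeal.comap (algebraMap (𝓞 K) (𝓞 L)) = v.asIdeal
  · rw [h w hwv]
  · simp only [Ideal.inertiaDeg', dif_neg hwv, Nat.cast_zero, zero_mul]

theorem relNormCount_eq_zero {K L : Type*} [Field K] [Field L] [NumberField L] [Algebra K L]
    {I : FractionalIdeal (𝓞 L)⁰ L} {v : HeightOneSpectrum (𝓞 K)}
    (h : ∀ w : HeightOneSpectrum (𝓞 L), w.asIdeal.comap (algebraMap (𝓞 K) (𝓞 L)) = v.asIdeal →
      FractionalIdeal.count L w I = 0) :
    relNormCount K L I v = 0 := by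
  rw [relNormCount_congr (J := 1) fun w hwv ↦ by rw [h w hwv, FractionalIdeal.count_one]]
  simp only [relNormCount, FractionalIdeal.count_one, mul_zero, finsum_zero]

theorem exists_coprime_divisor_with_same_norm
    (𝔪 : Ideal (𝓞 K))
    (𝔘 : FractionalIdeal (𝓞 L)⁰ L)
    (hcop : ∀ v : HeightOneSpectrum (𝓞 K), v.asIdeal ∣ 𝔪 → relNormCount K L 𝔘 v = 0) :
    ∃ 𝔅 : FractionalIdeal (𝓞 L)⁰ L, 𝔅 ≠ 0 ∧
      (∀ (w : HeightOneSpectrum (𝓞 L)) (v : HeightOneSpectrum (𝓞 K)),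
        w.asIdeal.comap (algebraMap (𝓞 K) (𝓞 L)) = v.asIdeal → v.asIdeal ∣ 𝔪 →
          FractionalIdeal.count L w 𝔅 = 0) ∧
      ∀ v : HeightOneSpectrum (𝓞 K), relNormCount K L 𝔅 v = relNormCount K L 𝔘 v := by
  classical
  -- `𝔅` is `𝔘` with its exponents above the primes dividing `𝔪` set to zero: at those primes
  -- both norms are trivial (by `hcop` for `𝔘`), and at all other primes nothing changes.
  let below (w : HeightOneSpectrum (𝓞 L)) := w.asIdeal.comap (algebraMap (𝓞 K) (𝓞 L))
  obtain ⟨𝔅, h𝔅, hcount⟩ := FractionalIdeal.exists_ne_zero_forall_count_eq (F := L)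
    (fun w ↦ if below w ∣ 𝔪 then 0 else FractionalIdeal.count L w 𝔘) <| by
      filter_upwards [FractionalIdeal.finite_factors 𝔘] with w hw
      simp [hw]
  have hcoprime : ∀ w (v : HeightOneSpectrum (𝓞 K)), below w = v.asIdeal → v.asIdeal ∣ 𝔪 →
      FractionalIdeal.count L w 𝔅 = 0 := by
    intro w v hwv hv
    simp [hcount, hwv ▸ hv]
  refine ⟨𝔅, h𝔅, hcoprime, fun v ↦ ?_⟩
  by_cases hv : v.asIdeal ∣ 𝔪
  · rw [hcop v hv]
    exact relNormCount_eq_zero fun w hwv ↦ hcoprime w v hwv hv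
  · refine relNormCount_congr fun w hwv ↦ ?_
    simp [hcount, below, hwv, hv]
end
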